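/- For every fixed t > 0, ρ(1 + t·ε)/ε → 2t as ε → 0⁺. In particular, for any sequence (ε_n) of positive reals tending to 0, ρ(1 + t·ε_n)/ε_n → 2t as n → ∞. -/

import Mathlib

/-!
A root `s ∈ (0,1)` of `Φ^{1+δ}` satisfies `-log (1 - s) = (1 + δ) s`. Comparing with
`-log (1 - s) = s + s²/2 + O(s³)`, the lower bound `s + s²/2 ≤ -log (1 - s)` first gives
`s ≤ 2δ`, and then the cubic error bound gives `|s - 2δ| = O(δ²)`. With `δ = tε` this is
`ρ(1 + tε)/ε = 2t + O(ε)`.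
-/

open Real Filter Set Topology

theorem Real.add_sq_div_two_le_neg_log_one_sub {s : ℝ} (h0 : 0 ≤ s) (h1 : s < 1) :
    s + s ^ 2 / 2 ≤ -log (1 - s) := by
  have hsum := hasSum_pow_div_log_of_abs_lt_one (by rwa [abs_of_nonneg h0])
  have := sum_le_hasSum (Finset.range 2) (fun n _ => by positivity) hsum
  norm_num [Finset.sum_range_succ] at this
  linarith

theorem Real.abs_neg_log_one_sub_sub_le {s : ℝ} (h0 : 0 ≤ s) (h1 : s < 1) :
    |-log (1 - s) - (s + s ^ 2 / 2)| ≤ s ^ 3 / (1 - s) := by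
  have := abs_log_sub_add_sum_range_le (x := s) (by rwa [abs_of_nonneg h0]) 2
  rw [abs_of_nonneg h0] at this
  norm_num [Finset.sum_range_succ] at this
  rw [← abs_neg]
  convert this using 2; ring

theorem neg_log_one_sub_eq_of_one_sub_sub_exp_eq_zero {s c : ℝ} (hroot : 1 - s - exp (-(c * s)) = 0) :
    -log (1 - s) = c * s := by
  rw [show 1 - s = exp (-(c * s)) by linarith, log_exp, neg_neg]

theorem le_two_mul_of_one_sub_sub_exp_eq_zero {s δ : ℝ} (hs : s ∈ Ioo 0 1)
    (hroot : 1 - s - exp (-((1 + δ) * s)) = 0) : s ≤ 2 * δ := by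
  have := add_sq_div_two_le_neg_log_one_sub hs.1.le hs.2
  rw [neg_log_one_sub_eq_of_one_sub_sub_exp_eq_zero hroot] at this
  nlinarith [hs.1]

theorem abs_sub_two_mul_le_of_one_sub_sub_exp_eq_zero {s δ : ℝ} (hs : s ∈ Ioo 0 1)
    (hroot : 1 - s - exp (-((1 + δ) * s)) = 0) (hδ : δ ≤ 1 / 4) :
    |s - 2 * δ| ≤ 16 * δ ^ 2 := by
  have hs_le : s ≤ 2 * δ := le_two_mul_of_one_sub_sub_exp_eq_zero hs hroot
  obtain ⟨hs0, hs1⟩ := hs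
  have htaylor := abs_neg_log_one_sub_sub_le hs0.le hs1
  rw [neg_log_one_sub_eq_of_one_sub_sub_exp_eq_zero hroot,
    show (1 + δ) * s - (s + s ^ 2 / 2) = s * ((2 * δ - s) / 2) by ring, abs_mul, abs_div,
    abs_of_pos hs0, abs_two, abs_sub_comm] at htaylor
  have hcubic : s ^ 3 / (1 - s) ≤ s * (2 * s ^ 2) := by
    rw [div_le_iff₀ (by linarith)]
    nlinarith [mul_le_mul_of_nonneg_left (show s ≤ 1 / 2 by linarith) (pow_pos hs0 3).le]
  nlinarith [le_of_mul_le_mul_left (htaylor.trans hcubic) hs0]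

theorem abs_rho_div_sub_le (ρ : ℝ → ℝ)
    (hρ : ∀ c : ℝ, 1 < c → ρ c ∈ Ioo (0 : ℝ) 1 ∧ 1 - ρ c - exp (-(c * ρ c)) = 0)
    {t ε : ℝ} (ht : 0 < t) (hε : ε ∈ Ioo 0 (1 / (4 * t))) :
    |ρ (1 + t * ε) / ε - 2 * t| ≤ 16 * t ^ 2 * ε := by
  obtain ⟨hε0, hε1⟩ := hε
  have htε : t * ε ≤ 1 / 4 := by
    rw [lt_div_iff₀ (by positivity)] at hε1; linarith
  obtain ⟨hs, hroot⟩ := hρ (1 + t * ε) (by nlinarith)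
  have := abs_sub_two_mul_le_of_one_sub_sub_exp_eq_zero hs hroot htε
  rw [show ρ (1 + t * ε) / ε - 2 * t = (ρ (1 + t * ε) - 2 * (t * ε)) / ε by field_simp,
    abs_div, abs_of_pos hε0, div_le_iff₀ hε0]
  linarith

/-- For every fixed `t > 0`, `ρ(1 + t*ε)/ε → 2t` as `ε → 0⁺`.  In particular, for any
sequence `(ε_n)` of positive reals tending to `0`, `ρ(1 + t*ε_n)/ε_n → 2t` as `n → ∞`. -/
theorem rho_barely_supercritical_asymptotics (ρ : ℝ → ℝ)
    (hρ : ∀ c : ℝ, 1 < c →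
      ρ c ∈ Set.Ioo (0 : ℝ) 1 ∧ 1 - ρ c - Real.exp (-(c * ρ c)) = 0)
    (t : ℝ) (ht : 0 < t) :
    Filter.Tendsto (fun ε : ℝ => ρ (1 + t * ε) / ε)
      (nhdsWithin 0 (Set.Ioi 0)) (nhds (2 * t)) ∧
    ∀ ε : ℕ → ℝ, (∀ n, 0 < ε n) → Filter.Tendsto ε Filter.atTop (nhds 0) →
      Filter.Tendsto (fun n : ℕ => ρ (1 + t * ε n) / ε n) Filter.atTop (nhds (2 * t)) := by
  have hlim : Tendsto (fun ε : ℝ => ρ (1 + t * ε) / ε) (𝓝[>] 0) (𝓝 (2 * t)) := by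
    have hbound : ∀ᶠ ε in 𝓝[>] (0 : ℝ), ‖ρ (1 + t * ε) / ε - 2 * t‖ ≤ 16 * t ^ 2 * ε :=
      eventually_of_mem (Ioo_mem_nhdsGT (by positivity)) fun ε hε =>
        abs_rho_div_sub_le ρ hρ ht hε
    have hlinear : Tendsto (fun ε : ℝ => 16 * t ^ 2 * ε) (𝓝[>] 0) (𝓝 0) :=
      ((continuous_const_mul _).tendsto' 0 0 (mul_zero _)).mono_left nhdsWithin_le_nhds
    exact tendsto_sub_nhds_zero_iff.1 (squeeze_zero_norm' hbound hlinear)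
  exact ⟨hlim, fun ε hpos hε => hlim.comp (tendsto_nhdsWithin_iff.2 ⟨hε, .of_forall hpos⟩)⟩
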